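/- Dominant eigenvalue of the power under the power-Doeblin condition: Let n be a nonempty finite index type, A an n×n real matrix with nonnegative entries, and N ≥ 1 a natural number. Suppose A^N satisfies the discrete Doeblin minorization: there exist α > 0 and vectors u, g : n → ℝ with u i > 0 and g j > 0 for all i, j, such that (A^N) i j ≥ α · u i · g j for all i, j. Then there exist r > 0 and a vector w : n → ℝ with w i > 0 for all i such that: (1) (A^N) *ᵥ w = r^N • w; (2) every eigenvalue μ of A (element of the spectrum of the complexified matrix Aℂ) satisfies ‖μ‖ ≤ r, so r^N = ρ(A)^N is the dominant eigenvalue of A^N; and (3) the eigenspace of A^N at r^N is one-dimensional: every v : n → ℂ with (Aℂ)^N *ᵥ v = r^N • v is a complex scalar multiple of the complexification of w. -/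

import Mathlib

/-!
`A ^ N` is entrywise positive, so Perron's theorem applies to it. Its Perron root `ρ` is the
largest `t` with `t • y ≤ B *ᵥ y` for some nonzero `y ≥ 0`, attained by compactness of the
simplex. At the maximum the inequality is an equality, since otherwise applying `B` once more
leaves strict slack in every coordinate; positivity of `B` then makes `y` strictly positive.
For a complex eigenvector `B v = μ v` the triangle inequality gives `‖μ‖ |v| ≤ B |v|`, so
`‖μ‖ ≤ ρ`; for `μ = ρ` it forces `B |v| = ρ |v| > 0`, so an eigenvector at `ρ` vanishing in
one coordinate is zero, and the eigenspace at `ρ` is a line. An eigenvalue `μ` of `A` gives the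
eigenvalue `μ ^ N` of `A ^ N`, whence `‖μ‖ ≤ ρ ^ (1 / N)`.
-/

open scoped Matrix
open Finset

namespace Matrix

variable {n : Type*} [Fintype n] {B : Matrix n n ℝ}

/-- The lower Collatz–Wielandt bounds of `B`; for `B ≥ 0` their maximum is the Perron root. -/
def subeigenvalues (B : Matrix n n ℝ) : Set ℝ :=
  {t | ∃ y : n → ℝ, 0 ≤ y ∧ y ≠ 0 ∧ t • y ≤ B *ᵥ y}

lemma mulVec_apply_pos (hB : ∀ i j, 0 < B i j) {y : n → ℝ} (hy : 0 ≤ y)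
    (hy0 : y ≠ 0) (i : n) : 0 < (B *ᵥ y) i := by
  obtain ⟨j, hj⟩ := (Pi.lt_def.1 (lt_of_le_of_ne hy (Ne.symm hy0))).2
  exact sum_pos' (fun k _ => mul_nonneg (hB i k).le (hy k)) ⟨j, mem_univ j, mul_pos (hB i j) hj⟩

lemma norm_map_ofReal_mulVec_apply_le (hB : ∀ i j, 0 ≤ B i j) (v : n → ℂ)
    (i : n) : ‖(B.map (Complex.ofReal ·) *ᵥ v) i‖ ≤ (B *ᵥ fun j => ‖v j‖) i :=
  calc ‖∑ j, (B i j : ℂ) * v j‖ ≤ ∑ j, ‖(B i j : ℂ) * v j‖ := norm_sum_le _ _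
    _ = ∑ j, B i j * ‖v j‖ := by
      simp only [norm_mul, Complex.norm_real, Real.norm_of_nonneg (hB _ _)]

lemma norm_smul_le_mulVec_norm (hB : ∀ i j, 0 ≤ B i j) {μ : ℂ} {v : n → ℂ}
    (hv : B.map (Complex.ofReal ·) *ᵥ v = μ • v) :
    ‖μ‖ • (fun j => ‖v j‖) ≤ B *ᵥ fun j => ‖v j‖ := fun i => by
  simpa [hv, norm_mul] using norm_map_ofReal_mulVec_apply_le hB v i

lemma norm_mem_subeigenvalues (hB : ∀ i j, 0 ≤ B i j) {μ : ℂ} {v : n → ℂ}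
    (hv0 : v ≠ 0) (hv : B.map (Complex.ofReal ·) *ᵥ v = μ • v) : ‖μ‖ ∈ subeigenvalues B :=
  ⟨_, fun _ => norm_nonneg _, fun h => hv0 (funext fun j => norm_eq_zero.1 (congrFun h j)),
    norm_smul_le_mulVec_norm hB hv⟩

lemma le_sum_of_smul_le_mulVec (hB : ∀ i j, 0 ≤ B i j) {t : ℝ} {x : n → ℝ}
    (hx : x ∈ stdSimplex ℝ n) (ht : t • x ≤ B *ᵥ x) : t ≤ ∑ i, ∑ j, B i j :=
  calc t = ∑ i, t * x i := by rw [← mul_sum, hx.2, mul_one]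
    _ ≤ ∑ i, (B *ᵥ x) i := sum_le_sum fun i _ => ht i
    _ ≤ ∑ i, ∑ j, B i j := sum_le_sum fun i _ => sum_le_sum fun j _ =>
      mul_le_of_le_one_right (hB i j) (mem_Icc_of_mem_stdSimplex hx j).2

lemma exists_isGreatest_subeigenvalues [Nonempty n] (hB : ∀ i j, 0 ≤ B i j) :
    ∃ ρ, IsGreatest (subeigenvalues B) ρ := by
  classical
  set S : Set (ℝ × (n → ℝ)) :=
    {p ∈ Set.Icc 0 (∑ i, ∑ j, B i j) ×ˢ stdSimplex ℝ n | p.1 • p.2 ≤ B *ᵥ p.2}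
  have hS : IsCompact S := (isCompact_Icc.prod (isCompact_stdSimplex ℝ n)).inter_right
    (isClosed_le (continuous_fst.smul continuous_snd)
      (continuous_const.matrix_mulVec continuous_snd))
  obtain ⟨i₀⟩ := ‹Nonempty n›
  have hS0 : ((0 : ℝ), Pi.single i₀ (1 : ℝ)) ∈ S := by
    refine ⟨⟨⟨le_rfl, ?_⟩, single_mem_stdSimplex ℝ i₀⟩, ?_⟩
    · exact sum_nonneg fun i _ => sum_nonneg fun j _ => hB i j
    · rw [zero_smul]
      exact fun i => sum_nonneg fun j _ =>
        mul_nonneg (hB i j) ((single_mem_stdSimplex ℝ i₀).1 j)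
  obtain ⟨p, ⟨⟨⟨hp0, -⟩, hpx⟩, hp⟩, hmax⟩ :=
    hS.exists_isMaxOn ⟨_, hS0⟩ continuous_fst.continuousOn
  refine ⟨p.1, ⟨p.2, hpx.1, ?_, hp⟩, ?_⟩
  · rintro h
    simpa [h] using hpx.2
  rintro t ⟨y, hy, hy0, hty⟩
  rcases le_or_gt t 0 with ht | ht
  · exact ht.trans hp0
  have hs : 0 < ∑ i, y i := by
    obtain ⟨j, hj⟩ := (Pi.lt_def.1 (lt_of_le_of_ne hy (Ne.symm hy0))).2
    exact sum_pos' (fun i _ => hy i) ⟨j, mem_univ j, hj⟩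
  set x := (∑ i, y i)⁻¹ • y
  have hx : x ∈ stdSimplex ℝ n :=
    ⟨fun i => mul_nonneg (inv_nonneg.2 hs.le) (hy i), by
      simp only [x, Pi.smul_apply, smul_eq_mul, ← mul_sum, inv_mul_cancel₀ hs.ne']⟩
  have htx : t • x ≤ B *ᵥ x := by
    rw [mulVec_smul, smul_comm]
    exact smul_le_smul_of_nonneg_left hty (inv_nonneg.2 hs.le)
  have hmem : (t, x) ∈ S := ⟨⟨⟨ht.le, le_sum_of_smul_le_mulVec hB hx htx⟩, hx⟩, htx⟩
  exact hmax hmem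

lemma mulVec_eq_smul_of_isGreatest (hB : ∀ i j, 0 < B i j) {ρ : ℝ}
    (hρ : IsGreatest (subeigenvalues B) ρ) {y : n → ℝ} (hy : 0 ≤ y) (hy0 : y ≠ 0)
    (hρy : ρ • y ≤ B *ᵥ y) : B *ᵥ y = ρ • y := by
  by_contra hne
  set z := B *ᵥ y - ρ • y
  have hz : 0 ≤ z := sub_nonneg.2 hρy
  have hz0 : z ≠ 0 := sub_ne_zero.2 hne
  set b := B *ᵥ y
  have hb : ∀ i, 0 < b i := mulVec_apply_pos hB hy hy0
  have hBz : ∀ i, 0 < (B *ᵥ z) i := mulVec_apply_pos hB hz hz0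
  have hBb : B *ᵥ b = ρ • b + B *ᵥ z := by
    rw [← mulVec_smul, ← mulVec_add, add_sub_cancel]
  obtain ⟨j, -⟩ := Function.ne_iff.1 hy0
  obtain ⟨k, -, hk⟩ := exists_min_image univ (fun i => (B *ᵥ z) i / b i) ⟨j, mem_univ j⟩
  have hε : 0 < (B *ᵥ z) k / b k := div_pos (hBz k) (hb k)
  have hsub : ρ + (B *ᵥ z) k / b k ∈ subeigenvalues B := by
    refine ⟨b, fun i => (hb i).le, fun h => (hb j).ne' (congrFun h j), fun i => ?_⟩
    have := (le_div_iff₀ (hb i)).1 (hk i (mem_univ i))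
    simp only [hBb, Pi.add_apply, Pi.smul_apply, smul_eq_mul]
    linarith
  linarith [hρ.2 hsub]

lemma exists_pos_eigenvector_of_pos [Nonempty n] (hB : ∀ i j, 0 < B i j) :
    ∃ ρ, IsGreatest (subeigenvalues B) ρ ∧ 0 < ρ ∧
      ∃ w : n → ℝ, (∀ i, 0 < w i) ∧ B *ᵥ w = ρ • w := by
  obtain ⟨ρ, hρ⟩ := exists_isGreatest_subeigenvalues fun i j => (hB i j).le
  obtain ⟨w, hw, hw0, hρw⟩ := hρ.1
  have heig := mulVec_eq_smul_of_isGreatest hB hρ hw hw0 hρw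
  have hpos : ∀ i, 0 < ρ * w i := fun i => by
    simpa [heig] using mulVec_apply_pos hB hw hw0 i
  have hρ0 : 0 < ρ := pos_of_mul_pos_left (hpos (Classical.arbitrary n)) (hw _)
  exact ⟨ρ, hρ, hρ0, w, fun i => pos_of_mul_pos_right (hpos i) hρ0.le, heig⟩

lemma eq_zero_of_isGreatest_of_apply_eq_zero (hB : ∀ i j, 0 < B i j) {ρ : ℝ}
    (hρ : IsGreatest (subeigenvalues B) ρ) {v : n → ℂ}
    (hv : B.map (Complex.ofReal ·) *ᵥ v = (ρ : ℂ) • v) {k : n} (hk : v k = 0) : v = 0 := by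
  by_contra hv0
  have hB' : ∀ i j, 0 ≤ B i j := fun i j => (hB i j).le
  have hρ0 : 0 ≤ ρ :=
    (abs_nonneg ρ).trans (by simpa using hρ.2 (norm_mem_subeigenvalues hB' hv0 hv))
  have hρy := norm_smul_le_mulVec_norm hB' hv
  rw [Complex.norm_of_nonneg hρ0] at hρy
  have hy : 0 ≤ fun j => ‖v j‖ := fun j => norm_nonneg (v j)
  have hy0 : (fun j => ‖v j‖) ≠ 0 :=
    fun h => hv0 (funext fun j => norm_eq_zero.1 (congrFun h j))
  have hpos := mulVec_apply_pos hB hy hy0 k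
  simp [mulVec_eq_smul_of_isGreatest hB hρ hy hy0 hρy, hk] at hpos

lemma exists_eq_smul_of_isGreatest [Nonempty n] (hB : ∀ i j, 0 < B i j)
    {ρ : ℝ} (hρ : IsGreatest (subeigenvalues B) ρ) {w : n → ℝ} (hw : ∀ i, 0 < w i)
    (hρw : B *ᵥ w = ρ • w) {v : n → ℂ} (hv : B.map (Complex.ofReal ·) *ᵥ v = (ρ : ℂ) • v) :
    ∃ c : ℂ, v = c • fun i => (w i : ℂ) := by
  set i₀ := Classical.arbitrary n
  have hwi₀ : (w i₀ : ℂ) ≠ 0 := Complex.ofReal_ne_zero.2 (hw i₀).ne'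
  have hρwℂ : B.map (Complex.ofReal ·) *ᵥ (fun i => (w i : ℂ)) = (ρ : ℂ) • fun i => (w i : ℂ) :=
    funext fun i => (Complex.ofRealHom.map_mulVec B w i).symm.trans (by simp [hρw])
  refine ⟨v i₀ / w i₀,
    sub_eq_zero.1 (eq_zero_of_isGreatest_of_apply_eq_zero hB hρ ?_ (k := i₀) ?_)⟩
  · rw [mulVec_sub, mulVec_smul, hv, hρwℂ, smul_sub, smul_comm]
  · simp [div_mul_cancel₀ _ hwi₀]

end Matrix

theorem power_doeblin_dominant_eigenvalue_of_power_general
    {n : Type*} [Fintype n] [DecidableEq n] [Nonempty n]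
    (A : Matrix n n ℝ)
    (N : ℕ) (hN : 1 ≤ N)
    (α : ℝ) (hα : 0 < α) (u g : n → ℝ)
    (hu : ∀ i, 0 < u i) (hg : ∀ j, 0 < g j)
    (hmin : ∀ i j, α * u i * g j ≤ (A ^ N) i j) :
    ∃ r : ℝ, 0 < r ∧ ∃ w : n → ℝ, (∀ i, 0 < w i) ∧
      (A ^ N) *ᵥ w = (r ^ N) • w ∧
      (∀ μ ∈ spectrum ℂ (A.map (Complex.ofReal ·)), ‖μ‖ ≤ r) ∧
      (∀ v : n → ℂ, ((A.map (Complex.ofReal ·)) ^ N) *ᵥ v = ((r : ℂ) ^ N) • v →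
        ∃ c : ℂ, v = c • fun i => (w i : ℂ)) := by
  have hB : ∀ i j, 0 < (A ^ N) i j := fun i j =>
    (mul_pos (mul_pos hα (hu i)) (hg j)).trans_le (hmin i j)
  obtain ⟨ρ, hρ, hρ0, w, hw, hρw⟩ := Matrix.exists_pos_eigenvector_of_pos hB
  have hN0 : N ≠ 0 := Nat.one_le_iff_ne_zero.1 hN
  set r := ρ ^ (N⁻¹ : ℝ)
  have hrN : r ^ N = ρ := Real.rpow_inv_natCast_pow hρ0.le hN0
  have hpow : A.map (Complex.ofReal ·) ^ N = (A ^ N).map (Complex.ofReal ·) :=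
    (A.map_pow Complex.ofRealHom N).symm
  refine ⟨r, by positivity, w, hw, hrN ▸ hρw, fun μ hμ => ?_, fun v hv => ?_⟩
  · rw [← Matrix.spectrum_toLin', ← Module.End.hasEigenvalue_iff_mem_spectrum] at hμ
    obtain ⟨v, hv⟩ := (hμ.pow N).exists_hasEigenvector
    have hAv : (A ^ N).map (Complex.ofReal ·) *ᵥ v = μ ^ N • v := by
      simpa [← Matrix.toLin'_pow, hpow] using hv.apply_eq_smul
    have hμN : ‖μ‖ ^ N ≤ r ^ N := by
      simpa [hrN] using hρ.2 (Matrix.norm_mem_subeigenvalues (fun i j => (hB i j).le) hv.2 hAv)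
    exact le_of_pow_le_pow_left₀ hN0 (by positivity) hμN
  · exact Matrix.exists_eq_smul_of_isGreatest hB hρ hw hρw 
      (by rw [← hpow, hv, ← hrN]; push_cast; rfl)

/-- Dominant eigenvalue of the power under the power-Doeblin condition: if
`A` is a nonnegative matrix whose power `A^N` (`N ≥ 1`) satisfies a discrete
Doeblin minorization `(A^N) i j ≥ α · u i · g j` with `α > 0` and `u, g`
strictly positive, then there are `r > 0` and a strictly positive vector `w`
with (1) `(A^N) *ᵥ w = r^N • w`; (2) every eigenvalue `μ` of the complexified
matrix satisfies `‖μ‖ ≤ r`; and (3) the eigenspace of `A^N` at `r^N` is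
one-dimensional: every complex eigenvector of `(Aℂ)^N` at `r^N` is a scalar
multiple of the complexification of `w`. -/
theorem power_doeblin_dominant_eigenvalue_of_power
    {n : Type*} [Fintype n] [DecidableEq n] [Nonempty n]
    (A : Matrix n n ℝ) (hA : ∀ i j, 0 ≤ A i j)
    (N : ℕ) (hN : 1 ≤ N)
    (α : ℝ) (hα : 0 < α) (u g : n → ℝ)
    (hu : ∀ i, 0 < u i) (hg : ∀ j, 0 < g j)
    (hmin : ∀ i j, α * u i * g j ≤ (A ^ N) i j) :
    ∃ r : ℝ, 0 < r ∧ ∃ w : n → ℝ, (∀ i, 0 < w i) ∧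
      (A ^ N) *ᵥ w = (r ^ N) • w ∧
      (∀ μ ∈ spectrum ℂ (A.map (Complex.ofReal ·)), ‖μ‖ ≤ r) ∧
      (∀ v : n → ℂ, ((A.map (Complex.ofReal ·)) ^ N) *ᵥ v = ((r : ℂ) ^ N) • v →
        ∃ c : ℂ, v = c • fun i => (w i : ℂ)) :=
  power_doeblin_dominant_eigenvalue_of_power_general A N hN α hα u g hu hg hmin
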